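/- arXiv:math/0201242 — 2 statements merged into one kernel-verified Lean document; each statement's English description precedes it below -/
import Mathlib

section
/- Let $N \geq 1$, let $(g^{ij})$ be a symmetric invertible real $N\times N$ matrix, and let $b^{ij}_k$ and $w^i_j$ be real numbers satisfying (i) $g^{is} b^{jk}_s = g^{js} b^{ik}_s$, (ii) $g^{is} w^j_s = g^{js} w^i_s$, and (iii) $g^{jr} b^{ik}_s w^s_r = g^{ir} b^{jk}_s w^s_r$ for all indices (summation over repeated indices). Then $b^{rk}_s w^j_r = b^{jk}_r w^r_s$ for all $j,k,s$. -/
open Matrix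


theorem stmt1 (N : ℕ) (hN : 1 ≤ N) (g : Matrix (Fin N) (Fin N) ℝ)
    (hsym : g.IsSymm) (hinv : IsUnit g)
    (b : Fin N → Fin N → Fin N → ℝ) (w : Fin N → Fin N → ℝ)
    (hb : ∀ i j k, ∑ s, g i s * b j k s = ∑ s, g j s * b i k s)
    (hw : ∀ i j, ∑ s, g i s * w j s = ∑ s, g j s * w i s)
    (h3 : ∀ i j k, ∑ r, ∑ s, g j r * b i k s * w s r = ∑ r, ∑ s, g i r * b j k s * w s r) :
    ∀ j k s, ∑ r, b r k s * w j r = ∑ r, b j k r * w r s := by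
  intro j k s
  have hg : ∀ i j, g j i = g i j := fun i j => hsym.apply i j
  set B : Matrix (Fin N) (Fin N) ℝ := Matrix.of (fun i s => b i k s) with hBdef
  set W : Matrix (Fin N) (Fin N) ℝ := Matrix.of w with hWdef
  have hB : g * Bᵀ = B * g := by
    ext i j'
    simp only [Matrix.mul_apply, Matrix.transpose_apply, hBdef, Matrix.of_apply]
    rw [hb i j' k]
    exact Finset.sum_congr rfl fun x _ => by rw [hg x j', mul_comm]
  have hW : g * Wᵀ = W * g := by
    ext i j'
    simp only [Matrix.mul_apply, Matrix.transpose_apply, hWdef, Matrix.of_apply]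
    rw [hw i j']
    exact Finset.sum_congr rfl fun x _ => by rw [hg x j', mul_comm]
  have h3' : B * W * g = (B * W * g)ᵀ := by
    ext i j'
    simp only [Matrix.mul_apply, Matrix.transpose_apply, hBdef, hWdef, Matrix.of_apply,
      Finset.sum_mul]
    rw [Finset.sum_comm]
    have := h3 i j' k
    calc ∑ x, ∑ u, b i k x * w x u * g u j'
        = ∑ u, ∑ x, g j' u * b i k x * w x u := by
          rw [Finset.sum_comm]
          exact Finset.sum_congr rfl fun x _ => Finset.sum_congr rfl fun u _ => by
            rw [hg x j']; ring
      _ = ∑ u, ∑ x, g i u * b j' k x * w x u := this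
      _ = ∑ u, ∑ x, b j' k x * w x u * g u i := by
          exact Finset.sum_congr rfl fun u _ => Finset.sum_congr rfl fun x _ => by
            rw [hg u i]; ring
  have key : B * W = W * B := by
    have h4 : B * W * g = W * B * g := by
      calc B * W * g = (B * W * g)ᵀ := h3'
        _ = gᵀ * (B * W)ᵀ := by rw [Matrix.transpose_mul]
        _ = g * (Wᵀ * Bᵀ) := by rw [hsym, Matrix.transpose_mul]
        _ = (g * Wᵀ) * Bᵀ := by rw [mul_assoc]
        _ = W * g * Bᵀ := by rw [hW]
        _ = W * (g * Bᵀ) := by rw [mul_assoc]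
        _ = W * (B * g) := by rw [hB]
        _ = W * B * g := by rw [mul_assoc]
    exact hinv.mul_right_cancel h4
  have := congrFun (congrFun key j) s
  simp only [Matrix.mul_apply, hBdef, hWdef, Matrix.of_apply] at this
  have e : ∑ r, b r k s * w j r = ∑ x, w j x * b x k s :=
    Finset.sum_congr rfl fun r _ => mul_comm _ _
  rw [e]
  exact this.symm
end

section
/- Let $U \subseteq \mathbb{R}^N$ be open, let $\varphi^{\alpha,i} : U \to \mathbb{R}$ ($1 \le \alpha \le L$, $1 \le i \le N$) be $C^2$ functions, let $\varepsilon_\alpha \in \mathbb{R}$, and let $b^{ij}_k : U \to \mathbb{R}$ be $C^1$ functions satisfying $\partial b^{jk}_r/\partial u^s - \partial b^{jk}_s/\partial u^r = \sum_{\alpha=1}^L \varepsilon_\alpha \left( \tfrac{\partial \varphi^{\alpha,j}}{\partial u^s} \tfrac{\partial \varphi^{\alpha,k}}{\partial u^r} - \tfrac{\partial \varphi^{\alpha,j}}{\partial u^r} \tfrac{\partial \varphi^{\alpha,k}}{\partial u^s} \right)$ for all indices. Define $A^{ij}_k = b^{ij}_k - \sum_{\alpha=1}^L \varepsilon_\alpha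 \varphi^{\alpha,i} \, \partial \varphi^{\alpha,j}/\partial u^k$. Then for each fixed $i,j$ the family $(A^{ij}_k)_k$ is closed, i.e. $\partial A^{ij}_k/\partial u^l = \partial A^{ij}_l/\partial u^k$ on $U$ for all $k,l$. -/
/-!
Differentiating `A^{ij}_k = b^{ij}_k - ∑ ε_α φ^{α,i} ∂_k φ^{α,j}`, the second-derivative terms
`φ^{α,i} ∂_l ∂_k φ^{α,j}` are symmetric in `k, l` and cancel in `∂_l A^{ij}_k - ∂_k A^{ij}_l`.
What remains is `∂_l b^{ij}_k - ∂_k b^{ij}_l - ∑ ε_α (∂_l φ^{α,i} ∂_k φ^{α,j} - ∂_k φ^{α,i} ∂_l φ^{α,j})`,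
which vanishes by the hypothesis on `b` with `(j, k, r, s) = (i, j, k, l)`.
-/

/-- Partial derivative of `f` in the `k`-th coordinate direction at `x`. -/
noncomputable def pd {N : ℕ} (f : (Fin N → ℝ) → ℝ) (k : Fin N) (x : Fin N → ℝ) : ℝ :=
  fderiv ℝ f x (Pi.single k 1)

section PartialDerivatives

variable {N : ℕ} {f g : (Fin N → ℝ) → ℝ} {k l : Fin N} {x : Fin N → ℝ}

lemma pd_sub (hf : DifferentiableAt ℝ f x) (hg : DifferentiableAt ℝ g x) :
    pd (fun y => f y - g y) k x = pd f k x - pd g k x := by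
  unfold pd
  rw [fderiv_fun_sub hf hg]
  rfl

lemma pd_sum {ι : Type*} {s : Finset ι} {F : ι → (Fin N → ℝ) → ℝ}
    (hF : ∀ α ∈ s, DifferentiableAt ℝ (F α) x) :
    pd (fun y => ∑ α ∈ s, F α y) k x = ∑ α ∈ s, pd (F α) k x := by
  unfold pd
  rw [fderiv_fun_sum hF]
  simp

lemma pd_mul (hf : DifferentiableAt ℝ f x) (hg : DifferentiableAt ℝ g x) :
    pd (fun y => f y * g y) k x = pd f k x * g x + f x * pd g k x := by
  unfold pd
  rw [fderiv_fun_mul hf hg]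
  simp only [add_apply, smul_apply, smul_eq_mul]
  ring

lemma pd_const_mul (c : ℝ) (hf : DifferentiableAt ℝ f x) :
    pd (fun y => c * f y) k x = c * pd f k x := by
  unfold pd
  rw [fderiv_const_mul hf]
  simp

lemma ContDiffAt.differentiableAt_pd (hf : ContDiffAt ℝ 2 f x) :
    DifferentiableAt ℝ (pd f k) x :=
  ((hf.fderiv_right (m := 1) (by norm_num)).differentiableAt one_ne_zero).clm_apply
    (differentiableAt_const _)

lemma ContDiffAt.pd_pd_comm (hf : ContDiffAt ℝ 2 f x) :
    pd (pd f k) l x = pd (pd f l) k x := by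
  have hd : DifferentiableAt ℝ (fderiv ℝ f) x :=
    (hf.fderiv_right (m := 1) (by norm_num)).differentiableAt one_ne_zero
  have pd_pd_eq (m n : Fin N) :
      pd (pd f m) n x = fderiv ℝ (fderiv ℝ f) x (Pi.single n 1) (Pi.single m 1) := by
    unfold pd
    rw [fderiv_clm_apply hd (differentiableAt_const _)]
    simp
  rw [pd_pd_eq, pd_pd_eq]
  exact hf.isSymmSndFDerivAt (by simp [minSmoothness_of_isRCLikeNormedField]) _ _

lemma pd_mul_pd_sub_pd_mul_pd (hf : DifferentiableAt ℝ f x) (hg : ContDiffAt ℝ 2 g x) :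
    pd (fun y => f y * pd g k y) l x - pd (fun y => f y * pd g l y) k x =
      pd f l x * pd g k x - pd f k x * pd g l x := by
  rw [pd_mul hf hg.differentiableAt_pd, pd_mul hf hg.differentiableAt_pd, hg.pd_pd_comm]
  ring

lemma pd_sum_mul_pd_sub {ι : Type*} {s : Finset ι} (c : ι → ℝ) {F G : ι → (Fin N → ℝ) → ℝ}
    (hF : ∀ α ∈ s, DifferentiableAt ℝ (F α) x) (hG : ∀ α ∈ s, ContDiffAt ℝ 2 (G α) x) :
    pd (fun y => ∑ α ∈ s, c α * F α y * pd (G α) k y) l x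
        - pd (fun y => ∑ α ∈ s, c α * F α y * pd (G α) l y) k x =
      ∑ α ∈ s, c α * (pd (F α) l x * pd (G α) k x - pd (F α) k x * pd (G α) l x) := by
  have hcF : ∀ α ∈ s, DifferentiableAt ℝ (fun y => c α * F α y) x :=
    fun α hα => (hF α hα).const_mul (c α)
  have hterm (m : Fin N) : ∀ α ∈ s, DifferentiableAt ℝ (fun y => c α * F α y * pd (G α) m y) x :=
    fun α hα => (hcF α hα).mul (hG α hα).differentiableAt_pd
  rw [pd_sum (hterm k), pd_sum (hterm l), ← Finset.sum_sub_distrib]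
  refine Finset.sum_congr rfl fun α hα => ?_
  rw [pd_mul_pd_sub_pd_mul_pd (hcF α hα) (hG α hα), pd_const_mul _ (hF α hα),
    pd_const_mul _ (hF α hα)]
  ring

end PartialDerivatives

theorem stmt2 (N L : ℕ) (U : Set (Fin N → ℝ)) (hU : IsOpen U)
    (φ : Fin L → Fin N → (Fin N → ℝ) → ℝ) (ε : Fin L → ℝ)
    (b : Fin N → Fin N → Fin N → (Fin N → ℝ) → ℝ)
    (hφ : ∀ α i, ContDiffOn ℝ 2 (φ α i) U)
    (hb : ∀ i j k, ContDiffOn ℝ 1 (b i j k) U)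
    (hrel : ∀ j k r s, ∀ x ∈ U,
      pd (b j k r) s x - pd (b j k s) r x =
        ∑ α, ε α * (pd (φ α j) s x * pd (φ α k) r x - pd (φ α j) r x * pd (φ α k) s x)) :
    ∀ i j k l, ∀ x ∈ U,
      pd (fun y => b i j k y - ∑ α, ε α * φ α i y * pd (φ α j) k y) l x =
      pd (fun y => b i j l y - ∑ α, ε α * φ α i y * pd (φ α j) l y) k x := by
  intro i j k l x hx
  have hφx (α m) : ContDiffAt ℝ 2 (φ α m) x := (hφ α m).contDiffAt (hU.mem_nhds hx)
  have hbx (m) : DifferentiableAt ℝ (b i j m) x :=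
    ((hb i j m).contDiffAt (hU.mem_nhds hx)).differentiableAt one_ne_zero
  have hcorr (m) : DifferentiableAt ℝ (fun y => ∑ α, ε α * φ α i y * pd (φ α j) m y) x :=
    .fun_sum fun α _ =>
      (((hφx α i).differentiableAt two_ne_zero).const_mul _).mul (hφx α j).differentiableAt_pd
  rw [pd_sub (hbx k) (hcorr k), pd_sub (hbx l) (hcorr l)]
  have hsum := pd_sum_mul_pd_sub (k := k) (l := l) (s := Finset.univ) ε
    (fun α _ => (hφx α i).differentiableAt two_ne_zero) (fun α _ => hφx α j)
  linarith [hrel i j k l x hx]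
end
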